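/- Equivalence theorem for vakonomic mechanics (local coordinate form): let 𝔏 : ℝ^n × ℝ^n × ℝ^m → ℝ be continuously differentiable, let E(q,v,p,λ) = p·v − 𝔏(q,v,λ), let Ω̄ be the bilinear form on ℝ^n × ℝ^n × ℝ^n × ℝ^m given by Ω̄((q̇,v̇,ṗ,λ̇),(δq,δv,δp,δλ)) = q̇·δp − ṗ·δq, and let Ω̂ be the bilinear form on ℝ^n × ℝ^n × ℝ^m given by Ω̂((q̇,ṗ,λ̇),(δq,δp,δλ)) = q̇·δp − ṗ·δq. For a continuously differentiable curve x(t) = (q(t),v(t),p(t),λ(t)) : [t₁,t₂] → ℝ^n × ℝ^n × ℝ^n × ℝ^m with t₁ < t₂, the following are equivalent: (1) for every continuously differentiable variation (δq,δv,δp,δλ) with δq(t₁) = δq(t₂) = 0, the function s ↦ ∫_{t₁}^{t₂} [ 𝔏(q+sδq, v+sδv, λ+sδλ) + (p+sδp)·(q'+sδq' − v − sδv) ] dt has derivative zero at s = 0; (2) for all t, the linear functional Ω̄(x'(t), ·) equals the Fréchet derivative of E at x(t); (3) for all t: p(t) = ∂𝔏/∂v, q'(t) = v(t), p'(t) = ∂𝔏/∂q,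 and ∂𝔏/∂λ = 0, all evaluated at (q(t),v(t),λ(t)); (4) for all t: p(t) = ∂𝔏/∂v(q(t),v(t),λ(t)) and the linear functional Ω̂((q'(t),p'(t),λ'(t)), ·) equals (δq,δp,δλ) ↦ (−∂𝔏/∂q)·δq + v(t)·δp + (∂𝔏/∂λ)·δλ evaluated at (q(t),v(t),λ(t)). -/

import Mathlib

/-!
Differentiating the Hamilton–Pontryagin action under the integral sign and integrating
`p · δq'` by parts (the boundary term dies because `δq` vanishes at `t₁, t₂`) gives the first
variation `∫ (∂𝔏/∂q - p')·δq + (∂𝔏/∂v - p)·δv + (∂𝔏/∂λ)·δλ + (q' - v)·δp`. Since `δq, δv, δp, δλ`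
are independent, the fundamental lemma of the calculus of variations shows that it vanishes
for all variations exactly when the implicit Euler–Lagrange equations hold. The two Dirac
formulations are identities between linear functionals of the test vector at each time;
comparing their coefficients with those of `dE` (resp. of the vakonomic Dirac differential)
yields the same equations.
-/

open scoped BigOperators

def dot {k : ℕ} (x y : Fin k → ℝ) : ℝ := ∑ i, x i * y i

open MeasureTheory Set

theorem dot_eq_dotProduct {k : ℕ} (x y : Fin k → ℝ) : dot x y = x ⬝ᵥ y := rfl

@[fun_prop]
theorem Continuous.dot {X : Type*} [TopologicalSpace X] {k : ℕ} {f g : X → Fin k → ℝ}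
    (hf : Continuous f) (hg : Continuous g) : Continuous fun x => dot (f x) (g x) :=
  hf.dotProduct hg

theorem eqOn_zero_of_forall_intervalIntegral_mul_eq_zero {a b : ℝ} (hab : a < b) {w : ℝ → ℝ}
    (hw : Continuous w)
    (h : ∀ φ : ℝ → ℝ, ContDiff ℝ 1 φ → φ a = 0 → φ b = 0 → ∫ t in a..b, φ t * w t = 0) :
    EqOn w 0 (Icc a b) := by
  have hae : ∀ᵐ t, t ∈ Ioo a b → w t = 0 := by
    refine isOpen_Ioo.ae_eq_zero_of_integral_contDiff_smul_eq_zero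
      (hw.locallyIntegrable.locallyIntegrableOn _) fun g hg _ hsupp => ?_
    have hg_out : ∀ t ∉ Ioo a b, g t = 0 := fun t ht =>
      image_eq_zero_of_notMem_tsupport fun h => ht (hsupp h)
    calc ∫ t, g t • w t = ∫ t in Ioc a b, g t * w t :=
          (setIntegral_eq_integral_of_forall_compl_eq_zero fun t ht => by
            rw [hg_out t fun h => ht (Ioo_subset_Ioc_self h), zero_smul]).symm
      _ = ∫ t in a..b, g t * w t := (intervalIntegral.integral_of_le hab.le).symm
      _ = 0 := h g (hg.of_le (by norm_num)) (hg_out a (by simp)) (hg_out b (by simp))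
  have hIoo : EqOn w 0 (Ioo a b) :=
    Measure.eqOn_open_of_ae_eq ((ae_restrict_iff' measurableSet_Ioo).2 hae) isOpen_Ioo
      hw.continuousOn continuousOn_const
  simpa [closure_Ioo hab.ne] using hIoo.closure hw continuous_const

theorem eqOn_zero_of_forall_intervalIntegral_dot_eq_zero {k : ℕ} {a b : ℝ} (hab : a < b)
    {w : ℝ → Fin k → ℝ} (hw : Continuous w)
    (h : ∀ δ : ℝ → Fin k → ℝ, ContDiff ℝ 1 δ → δ a = 0 → δ b = 0 →
      ∫ t in a..b, dot (w t) (δ t) = 0) :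
    EqOn w 0 (Icc a b) := fun t ht => funext fun i =>
  eqOn_zero_of_forall_intervalIntegral_mul_eq_zero hab (continuous_apply i |>.comp hw)
    (fun φ hφ ha hb => by
      simpa [dot_eq_dotProduct, mul_comm] using
        h (fun t => φ t • Pi.single i 1) (hφ.smul contDiff_const) (by simp [ha]) (by simp [hb]))
    ht

theorem hasDerivAt_intervalIntegral_of_continuous_deriv {E : Type*} [NormedAddCommGroup E]
    [NormedSpace ℝ E] {F F' : ℝ → ℝ → E} {a b s₀ : ℝ} (hF : ∀ s, Continuous (F s))
    (hF' : Continuous (Function.uncurry F')) (hd : ∀ s t, HasDerivAt (F · t) (F' s t) s) :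
    HasDerivAt (fun s => ∫ t in a..b, F s t) (∫ t in a..b, F' s₀ t) s₀ := by
  obtain ⟨C, hC⟩ := (isCompact_closedBall s₀ 1 |>.prod (isCompact_uIcc (a := a) (b := b)))
    |>.exists_bound_of_continuousOn hF'.continuousOn
  refine (intervalIntegral.hasDerivAt_integral_of_dominated_loc_of_deriv_le
    (Metric.closedBall_mem_nhds s₀ one_pos) (.of_forall fun s => (hF s).aestronglyMeasurable)
    ((hF s₀).intervalIntegrable _ _)
    (hF'.comp (Continuous.prodMk_right s₀)).aestronglyMeasurable
    (.of_forall fun t ht s hs => hC (s, t) ⟨hs, uIoc_subset_uIcc ht⟩)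
    intervalIntegrable_const (.of_forall fun t _ s _ => hd s t)).2

theorem HasDerivAt.dot {k : ℕ} {f g : ℝ → Fin k → ℝ} {f' g' : Fin k → ℝ} {t : ℝ}
    (hf : HasDerivAt f f' t) (hg : HasDerivAt g g' t) :
    HasDerivAt (fun t => dot (f t) (g t)) (dot f' (g t) + dot (f t) g') t := by
  simpa [_root_.dot, Finset.sum_add_distrib] using
    HasDerivAt.fun_sum fun i _ => (hasDerivAt_pi.1 hf i).mul (hasDerivAt_pi.1 hg i)

theorem HasFDerivAt.dot {X : Type*} [NormedAddCommGroup X] [NormedSpace ℝ X] {k : ℕ}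
    {f g : X → Fin k → ℝ} {f' g' : X →L[ℝ] Fin k → ℝ} {x : X}
    (hf : HasFDerivAt f f' x) (hg : HasFDerivAt g g' x) :
    ∃ D : X →L[ℝ] ℝ, HasFDerivAt (fun y => dot (f y) (g y)) D x ∧
      ∀ h, D h = dot (f' h) (g x) + dot (f x) (g' h) := by
  refine ⟨_, HasFDerivAt.fun_sum fun i _ => (hasFDerivAt_pi'.1 hf i).mul (hasFDerivAt_pi'.1 hg i),
    fun h => ?_⟩
  simp [_root_.dot, Finset.sum_add_distrib, mul_comm, add_comm]

theorem hasDerivAt_add_smul {F : Type*} [NormedAddCommGroup F] [NormedSpace ℝ F] (x v : F)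
    (s : ℝ) : HasDerivAt (fun s : ℝ => x + s • v) v s := by
  simpa using ((hasDerivAt_id s).smul_const v).const_add x

section VakonomicLagrangian

variable {n m : ℕ} {𝔏 : (Fin n → ℝ) × (Fin n → ℝ) × (Fin m → ℝ) → ℝ}
  {Gq Gv : (Fin n → ℝ) × (Fin n → ℝ) × (Fin m → ℝ) → Fin n → ℝ}
  {Gl : (Fin n → ℝ) × (Fin n → ℝ) × (Fin m → ℝ) → Fin m → ℝ}

def HasPartialGradients (𝔏 : (Fin n → ℝ) × (Fin n → ℝ) × (Fin m → ℝ) → ℝ)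
    (Gq Gv : (Fin n → ℝ) × (Fin n → ℝ) × (Fin m → ℝ) → Fin n → ℝ)
    (Gl : (Fin n → ℝ) × (Fin n → ℝ) × (Fin m → ℝ) → Fin m → ℝ) : Prop :=
  ∀ x, ∃ f : ((Fin n → ℝ) × (Fin n → ℝ) × (Fin m → ℝ)) →L[ℝ] ℝ, HasFDerivAt 𝔏 f x ∧
    ∀ y, f y = dot (Gq x) y.1 + dot (Gv x) y.2.1 + dot (Gl x) y.2.2

def energy (𝔏 : (Fin n → ℝ) × (Fin n → ℝ) × (Fin m → ℝ) → ℝ)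
    (x : (Fin n → ℝ) × (Fin n → ℝ) × (Fin n → ℝ) × (Fin m → ℝ)) : ℝ :=
  dot x.2.2.1 x.2.1 - 𝔏 (x.1, x.2.1, x.2.2.2)

namespace HasPartialGradients

theorem fderiv_apply (hG : HasPartialGradients 𝔏 Gq Gv Gl) (x y) :
    fderiv ℝ 𝔏 x y = dot (Gq x) y.1 + dot (Gv x) y.2.1 + dot (Gl x) y.2.2 := by
  obtain ⟨f, hf, hfy⟩ := hG x
  rw [hf.fderiv, hfy]

theorem continuous_gq (hG : HasPartialGradients 𝔏 Gq Gv Gl) (h𝔏 : ContDiff ℝ 1 𝔏) :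
    Continuous Gq :=
  continuous_pi fun i => by
    simpa [hG.fderiv_apply, dot_eq_dotProduct] using
      (h𝔏.continuous_fderiv one_ne_zero).clm_apply (continuous_const (y := (Pi.single i 1, 0, 0)))

theorem continuous_gv (hG : HasPartialGradients 𝔏 Gq Gv Gl) (h𝔏 : ContDiff ℝ 1 𝔏) :
    Continuous Gv :=
  continuous_pi fun i => by
    simpa [hG.fderiv_apply, dot_eq_dotProduct] using
      (h𝔏.continuous_fderiv one_ne_zero).clm_apply (continuous_const (y := (0, Pi.single i 1, 0)))

theorem continuous_gl (hG : HasPartialGradients 𝔏 Gq Gv Gl) (h𝔏 : ContDiff ℝ 1 𝔏) :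
    Continuous Gl :=
  continuous_pi fun i => by
    simpa [hG.fderiv_apply, dot_eq_dotProduct] using
      (h𝔏.continuous_fderiv one_ne_zero).clm_apply (continuous_const (y := (0, 0, Pi.single i 1)))

theorem hasFDerivAt_energy (hG : HasPartialGradients 𝔏 Gq Gv Gl)
    (a : (Fin n → ℝ) × (Fin n → ℝ) × (Fin n → ℝ) × (Fin m → ℝ)) :
    ∃ g : _ →L[ℝ] ℝ, HasFDerivAt (energy 𝔏) g a ∧ ∀ ζ, g ζ = dot a.2.2.1 ζ.2.1 + dot a.2.1 ζ.2.2.1 -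
      (dot (Gq (a.1, a.2.1, a.2.2.2)) ζ.1 + dot (Gv (a.1, a.2.1, a.2.2.2)) ζ.2.1 +
        dot (Gl (a.1, a.2.1, a.2.2.2)) ζ.2.2.2) := by
  have hid := hasFDerivAt_id (𝕜 := ℝ) a
  obtain ⟨D, hD, hDζ⟩ := hid.snd.snd.fst.dot hid.snd.fst
  obtain ⟨f, hf, hfy⟩ := hG (a.1, a.2.1, a.2.2.2)
  refine ⟨_, hD.sub (hf.comp a (hid.fst.prodMk (hid.snd.fst.prodMk hid.snd.snd.snd))), fun ζ => ?_⟩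
  simp [hDζ, hfy, dot_eq_dotProduct, dotProduct_comm, add_comm]

end HasPartialGradients

theorem forall_omegaHat_eq_iff {q' v p' gq : Fin n → ℝ} {gl : Fin m → ℝ} :
    (∀ δq δp δl, dot q' δp - dot p' δq = dot (-gq) δq + dot v δp + dot gl δl) ↔
      q' = v ∧ p' = gq ∧ gl = 0 := by
  refine ⟨fun h => ⟨dotProduct_eq _ _ fun δp => ?_, dotProduct_eq _ _ fun δq => ?_,
    dotProduct_eq _ _ fun δl => ?_⟩, ?_⟩
  · simpa [dot_eq_dotProduct] using h 0 δp 0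
  · simpa [dot_eq_dotProduct] using h δq 0 0
  · simpa [dot_eq_dotProduct] using (h 0 0 δl).symm
  · rintro ⟨rfl, rfl, rfl⟩ δq δp δl
    simp only [dot_eq_dotProduct, neg_dotProduct, zero_dotProduct]
    ring

theorem forall_omegaBar_eq_iff {q' v p p' gq gv : Fin n → ℝ} {gl : Fin m → ℝ} :
    (∀ ζ : (Fin n → ℝ) × (Fin n → ℝ) × (Fin n → ℝ) × (Fin m → ℝ),
      dot q' ζ.2.2.1 - dot p' ζ.1 =
        dot p ζ.2.1 + dot v ζ.2.2.1 - (dot gq ζ.1 + dot gv ζ.2.1 + dot gl ζ.2.2.2)) ↔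
      p = gv ∧ q' = v ∧ p' = gq ∧ gl = 0 := by
  refine ⟨fun h => ⟨dotProduct_eq _ _ fun δv => ?_, dotProduct_eq _ _ fun δp => ?_,
    dotProduct_eq _ _ fun δq => ?_, dotProduct_eq _ _ fun δl => ?_⟩, ?_⟩
  · simpa [dot_eq_dotProduct, sub_eq_zero] using (h (0, δv, 0, 0)).symm
  · simpa [dot_eq_dotProduct] using h (0, 0, δp, 0)
  · simpa [dot_eq_dotProduct] using h (δq, 0, 0, 0)
  · simpa [dot_eq_dotProduct] using (h (0, 0, 0, δl)).symm
  · rintro ⟨rfl, rfl, rfl, rfl⟩ ζ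
    simp only [dot_eq_dotProduct, zero_dotProduct]
    ring

def HamiltonPontryaginPrinciple (𝔏 : (Fin n → ℝ) × (Fin n → ℝ) × (Fin m → ℝ) → ℝ) (t₁ t₂ : ℝ)
    (q v p : ℝ → Fin n → ℝ) (l : ℝ → Fin m → ℝ) : Prop :=
  ∀ (δq δv δp : ℝ → Fin n → ℝ) (δl : ℝ → Fin m → ℝ),
    ContDiff ℝ 1 δq → ContDiff ℝ 1 δv → ContDiff ℝ 1 δp → ContDiff ℝ 1 δl →
    δq t₁ = 0 → δq t₂ = 0 →
    HasDerivAt (fun s : ℝ => ∫ t in t₁..t₂,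
      (𝔏 (q t + s • δq t, v t + s • δv t, l t + s • δl t) +
        dot (p t + s • δp t) (deriv q t + s • deriv δq t - v t - s • δv t))) 0 0

def ImplicitEulerLagrange (Gq Gv : (Fin n → ℝ) × (Fin n → ℝ) × (Fin m → ℝ) → Fin n → ℝ)
    (Gl : (Fin n → ℝ) × (Fin n → ℝ) × (Fin m → ℝ) → Fin m → ℝ) (t₁ t₂ : ℝ)
    (q v p : ℝ → Fin n → ℝ) (l : ℝ → Fin m → ℝ) : Prop :=
  ∀ t ∈ Icc t₁ t₂, p t = Gv (q t, v t, l t) ∧ deriv q t = v t ∧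
    deriv p t = Gq (q t, v t, l t) ∧ Gl (q t, v t, l t) = 0

variable {t₁ t₂ : ℝ} {q v p δq δv δp : ℝ → Fin n → ℝ} {l δl : ℝ → Fin m → ℝ}

theorem hasDerivAt_action (h𝔏 : ContDiff ℝ 1 𝔏) (hG : HasPartialGradients 𝔏 Gq Gv Gl)
    (hq : ContDiff ℝ 1 q) (hv : ContDiff ℝ 1 v) (hp : ContDiff ℝ 1 p) (hl : ContDiff ℝ 1 l)
    (hδq : ContDiff ℝ 1 δq) (hδv : ContDiff ℝ 1 δv) (hδp : ContDiff ℝ 1 δp)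
    (hδl : ContDiff ℝ 1 δl) (h₁ : δq t₁ = 0) (h₂ : δq t₂ = 0) :
    HasDerivAt (fun s : ℝ => ∫ t in t₁..t₂,
      (𝔏 (q t + s • δq t, v t + s • δv t, l t + s • δl t) +
        dot (p t + s • δp t) (deriv q t + s • deriv δq t - v t - s • δv t)))
      (∫ t in t₁..t₂, (dot (Gq (q t, v t, l t) - deriv p t) (δq t) +
        dot (Gv (q t, v t, l t) - p t) (δv t) + dot (Gl (q t, v t, l t)) (δl t) +
        dot (deriv q t - v t) (δp t))) 0 := by
  have := h𝔏.continuous_fderiv one_ne_zero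
  have := hq.continuous_deriv le_rfl; have := hp.continuous_deriv le_rfl
  have := hδq.continuous_deriv le_rfl
  have := hG.continuous_gq h𝔏; have := hG.continuous_gv h𝔏; have := hG.continuous_gl h𝔏
  have hraw := hasDerivAt_intervalIntegral_of_continuous_deriv (a := t₁) (b := t₂) (s₀ := 0)
    (F := fun s t => 𝔏 (q t + s • δq t, v t + s • δv t, l t + s • δl t) +
      dot (p t + s • δp t) (deriv q t + s • deriv δq t - v t - s • δv t))
    (F' := fun s t => fderiv ℝ 𝔏 (q t + s • δq t, v t + s • δv t, l t + s • δl t)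
        (δq t, δv t, δl t) +
      (dot (δp t) (deriv q t + s • deriv δq t - v t - s • δv t) +
        dot (p t + s • δp t) (deriv δq t - δv t)))
    (fun s => by fun_prop) (by fun_prop) fun s t => by
      have hcurve : HasDerivAt (fun s : ℝ => deriv q t + s • deriv δq t - v t - s • δv t)
          (deriv δq t - δv t) s := by
        simpa using ((hasDerivAt_add_smul _ _ s).sub_const (v t)).fun_sub
          ((hasDerivAt_id s).smul_const (δv t))
      exact ((h𝔏.differentiable one_ne_zero _).hasFDerivAt.comp_hasDerivAt s
        ((hasDerivAt_add_smul _ _ s).prodMk ((hasDerivAt_add_smul _ _ s).prodMk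
          (hasDerivAt_add_smul _ _ s)))).add ((hasDerivAt_add_smul _ _ s).dot hcurve)
  have hibp : ∫ t in t₁..t₂, (dot (deriv p t) (δq t) + dot (p t) (deriv δq t)) = 0 := by
    rw [intervalIntegral.integral_eq_sub_of_hasDerivAt (fun t _ =>
      (hp.differentiable one_ne_zero t).hasDerivAt.dot
        (hδq.differentiable one_ne_zero t).hasDerivAt)
      (Continuous.intervalIntegrable (by fun_prop) _ _)]
    simp [h₁, h₂, dot_eq_dotProduct]
  simp only [zero_smul, add_zero, sub_zero] at hraw
  refine hraw.congr_deriv ?_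
  rw [← sub_eq_zero, ← intervalIntegral.integral_sub
    (Continuous.intervalIntegrable (by fun_prop) _ _)
    (Continuous.intervalIntegrable (by fun_prop) _ _), ← hibp]
  refine intervalIntegral.integral_congr fun t _ => ?_
  simp only [hG.fderiv_apply, dot_eq_dotProduct, sub_dotProduct, dotProduct_sub,
    dotProduct_comm (δp t)]
  ring

theorem ImplicitEulerLagrange.hamiltonPontryaginPrinciple (ht : t₁ ≤ t₂)
    (h𝔏 : ContDiff ℝ 1 𝔏) (hG : HasPartialGradients 𝔏 Gq Gv Gl) (hq : ContDiff ℝ 1 q)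
    (hv : ContDiff ℝ 1 v) (hp : ContDiff ℝ 1 p) (hl : ContDiff ℝ 1 l)
    (hEL : ImplicitEulerLagrange Gq Gv Gl t₁ t₂ q v p l) :
    HamiltonPontryaginPrinciple 𝔏 t₁ t₂ q v p l := by
  intro δq δv δp δl hδq hδv hδp hδl h₁ h₂
  refine (hasDerivAt_action h𝔏 hG hq hv hp hl hδq hδv hδp hδl h₁ h₂).congr_deriv ?_
  rw [intervalIntegral.integral_congr (g := fun _ => 0) fun t ht' => ?_,
    intervalIntegral.integral_zero]
  obtain ⟨hpv, hqv, hpq, hgl⟩ := hEL t (uIcc_of_le ht ▸ ht')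
  simp [hpv, hqv, hpq, hgl, dot_eq_dotProduct]

theorem HamiltonPontryaginPrinciple.implicitEulerLagrange (ht : t₁ < t₂)
    (h𝔏 : ContDiff ℝ 1 𝔏) (hG : HasPartialGradients 𝔏 Gq Gv Gl) (hq : ContDiff ℝ 1 q)
    (hv : ContDiff ℝ 1 v) (hp : ContDiff ℝ 1 p) (hl : ContDiff ℝ 1 l)
    (hHP : HamiltonPontryaginPrinciple 𝔏 t₁ t₂ q v p l) :
    ImplicitEulerLagrange Gq Gv Gl t₁ t₂ q v p l := by
  have hS : ∀ (δq δv δp : ℝ → Fin n → ℝ) (δl : ℝ → Fin m → ℝ),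
      ContDiff ℝ 1 δq → ContDiff ℝ 1 δv → ContDiff ℝ 1 δp → ContDiff ℝ 1 δl →
      δq t₁ = 0 → δq t₂ = 0 →
      ∫ t in t₁..t₂, (dot (Gq (q t, v t, l t) - deriv p t) (δq t) +
        dot (Gv (q t, v t, l t) - p t) (δv t) + dot (Gl (q t, v t, l t)) (δl t) +
        dot (deriv q t - v t) (δp t)) = 0 :=
    fun δq δv δp δl hδq hδv hδp hδl h₁ h₂ =>
      (hasDerivAt_action h𝔏 hG hq hv hp hl hδq hδv hδp hδl h₁ h₂).unique
        (hHP δq δv δp δl hδq hδv hδp hδl h₁ h₂)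
  have := hq.continuous_deriv le_rfl; have := hp.continuous_deriv le_rfl
  have := hG.continuous_gq h𝔏; have := hG.continuous_gv h𝔏; have := hG.continuous_gl h𝔏
  have hq' := eqOn_zero_of_forall_intervalIntegral_dot_eq_zero ht
    (w := fun t => Gq (q t, v t, l t) - deriv p t) (by fun_prop) fun δ hδ h₁ h₂ => by
      simpa [dot_eq_dotProduct] using
        hS δ 0 0 0 hδ contDiff_const contDiff_const contDiff_const h₁ h₂
  have hv' := eqOn_zero_of_forall_intervalIntegral_dot_eq_zero ht
    (w := fun t => Gv (q t, v t, l t) - p t) (by fun_prop) fun δ hδ _ _ => by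
      simpa [dot_eq_dotProduct] using
        hS 0 δ 0 0 contDiff_const hδ contDiff_const contDiff_const rfl rfl
  have hl' := eqOn_zero_of_forall_intervalIntegral_dot_eq_zero ht
    (w := fun t => Gl (q t, v t, l t)) (by fun_prop) fun δ hδ _ _ => by
      simpa [dot_eq_dotProduct] using
        hS 0 0 0 δ contDiff_const contDiff_const contDiff_const hδ rfl rfl
  have hp' := eqOn_zero_of_forall_intervalIntegral_dot_eq_zero ht
    (w := fun t => deriv q t - v t) (by fun_prop) fun δ hδ _ _ => by
      simpa [dot_eq_dotProduct] using
        hS 0 0 δ 0 contDiff_const contDiff_const hδ contDiff_const rfl rfl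
  exact fun t ht => ⟨(sub_eq_zero.1 (hv' ht)).symm, sub_eq_zero.1 (hp' ht),
    (sub_eq_zero.1 (hq' ht)).symm, hl' ht⟩

end VakonomicLagrangian

/-- equivalence theorem for vakonomic mechanics in local
coordinates.  For a `C¹` curve `x(t) = (q(t),v(t),p(t),λ(t))` and a `C¹`
vakonomic Lagrangian `𝔏` with partial gradients `Gq, Gv, Gl`, the following
are equivalent:
(1) the Hamilton-Pontryagin principle holds;
(2) `Ω̄(x'(t),·)` equals the Fréchet derivative of the generalized energy
    `E(q,v,p,λ) = p·v − 𝔏(q,v,λ)` at `x(t)` for all `t`;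
(3) the implicit vakonomic Euler-Lagrange equations hold;
(4) `p(t) = ∂𝔏/∂v` and `Ω̂((q'(t),p'(t),λ'(t)),·)` equals the functional
    `(δq,δp,δλ) ↦ (−∂𝔏/∂q)·δq + v·δp + (∂𝔏/∂λ)·δλ` for all `t`. -/
theorem vakonomic_equivalence {n m : ℕ}
    (𝔏 : (Fin n → ℝ) × (Fin n → ℝ) × (Fin m → ℝ) → ℝ)
    (Gq Gv : (Fin n → ℝ) × (Fin n → ℝ) × (Fin m → ℝ) → Fin n → ℝ)
    (Gl : (Fin n → ℝ) × (Fin n → ℝ) × (Fin m → ℝ) → Fin m → ℝ)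
    (h𝔏 : ContDiff ℝ 1 𝔏)
    (hG : ∀ x : (Fin n → ℝ) × (Fin n → ℝ) × (Fin m → ℝ),
      ∃ f : ((Fin n → ℝ) × (Fin n → ℝ) × (Fin m → ℝ)) →L[ℝ] ℝ,
        HasFDerivAt 𝔏 f x ∧
        ∀ y : (Fin n → ℝ) × (Fin n → ℝ) × (Fin m → ℝ),
          f y = dot (Gq x) y.1 + dot (Gv x) y.2.1 + dot (Gl x) y.2.2)
    (E : (Fin n → ℝ) × (Fin n → ℝ) × (Fin n → ℝ) × (Fin m → ℝ) → ℝ)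
    (hE : ∀ x : (Fin n → ℝ) × (Fin n → ℝ) × (Fin n → ℝ) × (Fin m → ℝ),
      E x = dot x.2.2.1 x.2.1 - 𝔏 (x.1, x.2.1, x.2.2.2))
    (t₁ t₂ : ℝ) (ht : t₁ < t₂)
    (q v p : ℝ → Fin n → ℝ) (l : ℝ → Fin m → ℝ)
    (hq : ContDiff ℝ 1 q) (hv : ContDiff ℝ 1 v) (hp : ContDiff ℝ 1 p)
    (hl : ContDiff ℝ 1 l) :
    List.TFAE
      [ -- (1) the Hamilton-Pontryagin variational principle
        (∀ (δq δv δp : ℝ → Fin n → ℝ) (δl : ℝ → Fin m → ℝ),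
          ContDiff ℝ 1 δq → ContDiff ℝ 1 δv → ContDiff ℝ 1 δp →
          ContDiff ℝ 1 δl → δq t₁ = 0 → δq t₂ = 0 →
          HasDerivAt (fun s : ℝ => ∫ t in t₁..t₂,
            (𝔏 (q t + s • δq t, v t + s • δv t, l t + s • δl t) +
              dot (p t + s • δp t)
                (deriv q t + s • deriv δq t - v t - s • δv t)))
            0 0),
        -- (2) integral curve of the vakonomic Lagrange-Dirac system (D̄, E)
        (∀ t ∈ Set.Icc t₁ t₂,
          ∃ g : ((Fin n → ℝ) × (Fin n → ℝ) × (Fin n → ℝ) × (Fin m → ℝ)) →L[ℝ] ℝ,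
            HasFDerivAt E g (q t, v t, p t, l t) ∧
            ∀ ζ : (Fin n → ℝ) × (Fin n → ℝ) × (Fin n → ℝ) × (Fin m → ℝ),
              g ζ = dot (deriv q t) ζ.2.2.1 - dot (deriv p t) ζ.1),
        -- (3) implicit vakonomic Euler-Lagrange equations
        (∀ t ∈ Set.Icc t₁ t₂,
          p t = Gv (q t, v t, l t) ∧
          deriv q t = v t ∧
          deriv p t = Gq (q t, v t, l t) ∧
          Gl (q t, v t, l t) = 0),
        -- (4) solution of the vakonomic Lagrange-Dirac system (D̂, 𝔏)
        (∀ t ∈ Set.Icc t₁ t₂,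
          p t = Gv (q t, v t, l t) ∧
          ∀ (δq δp : Fin n → ℝ) (δl : Fin m → ℝ),
            dot (deriv q t) δp - dot (deriv p t) δq =
              dot (-(Gq (q t, v t, l t))) δq + dot (v t) δp +
                dot (Gl (q t, v t, l t)) δl) ] := by
  obtain rfl : E = energy 𝔏 := funext hE
  tfae_have 1 ↔ 3 := ⟨HamiltonPontryaginPrinciple.implicitEulerLagrange ht h𝔏 hG hq hv hp hl,
    ImplicitEulerLagrange.hamiltonPontryaginPrinciple ht.le h𝔏 hG hq hv hp hl⟩
  tfae_have 2 ↔ 3 := forall₂_congr fun t _ => by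
    obtain ⟨g, hg, hgζ⟩ :=
      HasPartialGradients.hasFDerivAt_energy hG (q t, v t, p t, l t)
    rw [← forall_omegaBar_eq_iff]
    exact ⟨fun ⟨g', hg', hg'ζ⟩ ζ => by rw [← hg'ζ, hg'.unique hg, hgζ],
      fun h => ⟨g, hg, fun ζ => by rw [hgζ, h]⟩⟩
  tfae_have 4 ↔ 3 := forall₂_congr fun t _ => and_congr_right' forall_omegaHat_eq_iff
  tfae_finish
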